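/- If x : ℝ → ℝ is periodic with minimal period p > 0 and satisfies x(t - 2) = -x(t) for all t, and x is not constant, then p = 4/(2m-1) for some positive integer m. In particular 4 is a period of x. -/

import Mathlib

/-!
Shifting by 2 negates `x`, so 4 is a period, hence an integer multiple `n * p` of the minimal
period: the remainder of 4 modulo `p` is again a period, smaller than `p`. If `n` were even, 2 would
be a period as well as an antiperiod, forcing `x = 0`.
-/

open Function

theorem Function.Periodic.exists_int_mul_eq_of_minimal {K α : Type*} [Field K] [LinearOrder K]
    [IsStrictOrderedRing K] [FloorRing K] {f : K → α} {p c : K} (hf : Periodic f p) (hp : 0 < p)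
    (hmin : ∀ q, 0 < q → Periodic f q → p ≤ q) (hc : Periodic f c) : ∃ n : ℤ, c = n * p := by
  have hrem : c - ⌊c / p⌋ * p = Int.fract (c / p) * p := by
    rw [← Int.self_sub_floor]; field_simp
  have hrem_per : Periodic f (Int.fract (c / p) * p) := hrem ▸ hc.sub_period (hf.int_mul _)
  have hrem_lt : Int.fract (c / p) * p < p := by
    simpa using mul_lt_mul_of_pos_right (Int.fract_lt_one (c / p)) hp
  have hrem_zero : Int.fract (c / p) * p = 0 := by
    by_contra hne
    have hpos := lt_of_le_of_ne (mul_nonneg (Int.fract_nonneg _) hp.le) (Ne.symm hne)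
    exact (hmin _ hpos hrem_per).not_gt hrem_lt
  exact ⟨⌊c / p⌋, by linear_combination hrem + hrem_zero⟩

theorem Function.Antiperiodic.eq_zero_of_periodic {α β : Type*} [Add α] [AddGroup β]
    [IsAddTorsionFree β] {f : α → β} {c : α} (ha : Antiperiodic f c) (hp : Periodic f c) :
    f = 0 :=
  funext fun x => self_eq_neg.mp ((hp x).symm.trans (ha x))

theorem Function.Antiperiodic.odd_of_two_mul_eq_int_mul {α β : Type*} [Ring α] [NoZeroDivisors α]
    [CharZero α] [AddGroup β] [IsAddTorsionFree β] {f : α → β} {c p : α} {n : ℤ}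
    (ha : Antiperiodic f c) (hp : Periodic f p) (hf : f ≠ 0) (hn : 2 * c = n * p) : Odd n := by
  by_contra hodd
  obtain ⟨k, rfl⟩ := Int.not_odd_iff_even.mp hodd
  have hc : c = k * p := mul_left_cancel₀ two_ne_zero (by rw [hn, two_mul, Int.cast_add, add_mul])
  exact hf (ha.eq_zero_of_periodic (hc ▸ hp.int_mul k))

theorem Int.exists_pos_nat_eq_two_mul_sub_one {n : ℤ} (hodd : Odd n) (hpos : 0 < n) :
    ∃ m : ℕ, 0 < m ∧ n = 2 * m - 1 := by
  obtain ⟨k, rfl⟩ := hodd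
  exact ⟨(k + 1).toNat, by omega, by omega⟩

theorem minimal_period_of_antisymmetric_general
    (x : ℝ → ℝ) (hnc : ∃ s t : ℝ, x s ≠ x t)
    (p : ℝ) (hp : 0 < p) (hper : ∀ t : ℝ, x (t + p) = x t)
    (hmin : ∀ q : ℝ, 0 < q → (∀ t : ℝ, x (t + q) = x t) → p ≤ q)
    (hanti : ∀ t : ℝ, x (t - 2) = -x t) :
    (∃ m : ℕ, 0 < m ∧ p = 4 / (2 * (m : ℝ) - 1)) ∧ ∀ t : ℝ, x (t + 4) = x t := by
  have hanti' : Antiperiodic x 2 := fun t => by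
    simpa [neg_eq_iff_eq_neg] using (hanti (t + 2)).symm
  have h4 : Periodic x 4 := by simpa [two_mul, ← two_add_two_eq_four] using hanti'.periodic_two_mul
  obtain ⟨n, hn⟩ := Periodic.exists_int_mul_eq_of_minimal hper hp hmin h4
  have hx : x ≠ 0 := by
    obtain ⟨s, t, hst⟩ := hnc
    rintro rfl
    exact hst rfl
  have hodd : Odd n := hanti'.odd_of_two_mul_eq_int_mul hper hx (by linarith)
  have hpos : 0 < n := Int.cast_pos.mp (pos_of_mul_pos_left (α := ℝ) (hn ▸ four_pos) hp.le)
  obtain ⟨m, hm, rfl⟩ := Int.exists_pos_nat_eq_two_mul_sub_one hodd hpos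
  have hm' : (1 : ℝ) ≤ m := by exact_mod_cast hm
  refine ⟨⟨m, hm, eq_div_of_mul_eq (by linarith) ?_⟩, h4⟩
  push_cast at hn
  linarith

theorem minimal_period_of_antisymmetric
    (x : ℝ → ℝ) (hcont : Continuous x) (hnc : ∃ s t : ℝ, x s ≠ x t)
    (p : ℝ) (hp : 0 < p) (hper : ∀ t : ℝ, x (t + p) = x t)
    (hmin : ∀ q : ℝ, 0 < q → (∀ t : ℝ, x (t + q) = x t) → p ≤ q)
    (hanti : ∀ t : ℝ, x (t - 2) = -x t) :
    (∃ m : ℕ, 0 < m ∧ p = 4 / (2 * (m : ℝ) - 1)) ∧ ∀ t : ℝ, x (t + 4) = x t :=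
  minimal_period_of_antisymmetric_general x hnc p hp hper hmin hanti
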